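/- arXiv:2506.02190 — 5 statements merged into one kernel-verified Lean document; each statement's English description precedes it below -/
import Mathlib

section
/- Let 1 ≤ h ≤ D−1 and let x,y ∈ X be vertices with ∂(x,y) = h. Then for all 0 ≤ i,j ≤ D, Σ_{ξ ∈ Γ_i(x) ∩ Γ_j(y)} Eξ = p^h_{i,j}·(θ*_0 θ*_i − θ*_h θ*_j)/(θ*_0² − θ*_h²)·Ex + p^h_{i,j}·(θ*_0 θ*_j − θ*_h θ*_i)/(θ*_0² − θ*_h²)·Ey. -/
open Finset

noncomputable section

/-- The `i`-th distance matrix of a graph, as a complex matrix. -/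
def distMat {X : Type} [Fintype X] [DecidableEq X] (G : SimpleGraph X) (i : ℕ) : Matrix X X ℂ :=
  Matrix.of (fun x y => if G.dist x y = i then 1 else 0)

/-- The column of a matrix at a vertex `x`, i.e. the image of the standard basis vector `x`. -/
def Ecol {X : Type} (E : Matrix X X ℂ) (x : X) : X → ℂ := fun a => E a x

/-- Let `1 ≤ h ≤ D−1` and `x,y ∈ X` at distance `h`.  Then for `0 ≤ i,j ≤ D`,
`Σ_{ξ ∈ Γ_i(x) ∩ Γ_j(y)} Eξ` equals
`p^h_{i,j}(θ*_0θ*_i − θ*_hθ*_j)/(θ*_0² − θ*_h²) Ex + p^h_{i,j}(θ*_0θ*_j − θ*_hθ*_i)/(θ*_0² − θ*_h²) Ey`. -/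
theorem stmt2
    {X : Type} [Fintype X] [DecidableEq X] (G : SimpleGraph X)
    (hX : 2 ≤ Fintype.card X) (hconn : G.Connected)
    (D : ℕ) (hD : 3 ≤ D)
    (hdle : ∀ x y : X, G.dist x y ≤ D) (hdeq : ∃ x y : X, G.dist x y = D)
    (p : ℕ → ℕ → ℕ → ℕ)
    (hreg : ∀ h i j : ℕ, h ≤ D → i ≤ D → j ≤ D → ∀ x y : X, G.dist x y = h →
      (Finset.univ.filter (fun ξ : X => G.dist x ξ = i ∧ G.dist y ξ = j)).card = p h i j)
    (hbip : ∀ i : ℕ, i ≤ D → p i 1 i = 0)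
    (hantip : p 0 D D = 1)
    (E : ℕ → Matrix X X ℂ)
    (hE0 : E 0 = (Fintype.card X : ℂ)⁻¹ • Matrix.of (fun _ _ => 1))
    (hidem : ∀ i j : ℕ, i ≤ D → j ≤ D → E i * E j = if i = j then E i else 0)
    (hherm : ∀ i : ℕ, i ≤ D → (E i).IsHermitian)
    (hEsum : ∑ i ∈ Finset.range (D + 1), E i = 1)
    (θ : ℕ → ℝ)
    (heig : ∀ i : ℕ, i ≤ D → distMat G 1 * E i = (θ i : ℂ) • E i)
    (qK : ℕ → ℕ → ℕ → ℂ)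
    (hKrein : ∀ i j : ℕ, i ≤ D → j ≤ D →
      Matrix.hadamard (E i) (E j)
        = (Fintype.card X : ℂ)⁻¹ • ∑ h ∈ Finset.range (D + 1), qK h i j • E h)
    (hQ0 : ∀ h i j : ℕ, h ≤ D → i ≤ D → j ≤ D → (i + j < h ∨ j + h < i ∨ h + i < j) → qK h i j = 0)
    (hQ1 : ∀ h i j : ℕ, h ≤ D → i ≤ D → j ≤ D → (h = i + j ∨ i = j + h ∨ j = h + i) → qK h i j ≠ 0)
    (θs : ℕ → ℝ)
    (hdual : E 1 = (Fintype.card X : ℂ)⁻¹ • ∑ i ∈ Finset.range (D + 1), (θs i : ℂ) • distMat G i)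
    (hsd : ∀ i : ℕ, i ≤ D → θ i = θs i)
    (hpq : ∀ h i j : ℕ, h ≤ D → i ≤ D → j ≤ D → qK h i j = (p h i j : ℂ))
    (hdistinct : ∀ i j : ℕ, i ≤ D → j ≤ D → i ≠ j → θs i ≠ θs j)
    (hbnd : ∀ i : ℕ, 1 ≤ i → i ≤ D - 1 → -θs 0 < θs i ∧ θs i < θs 0)
    (hbD : θs D = -θs 0)
    (hsb : ∀ h : ℕ, 1 ≤ h → h ≤ D - 1 → ∀ x y : X, G.dist x y = h → ∀ i j : ℕ, i ≤ D → j ≤ D →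
      (∑ ξ ∈ Finset.univ.filter (fun ξ : X => G.dist x ξ = i ∧ G.dist y ξ = j), Ecol (E 1) ξ)
        ∈ Submodule.span ℂ ({Ecol (E 1) x, Ecol (E 1) y} : Set (X → ℂ)))
    :
    ∀ h : ℕ, 1 ≤ h → h ≤ D - 1 → ∀ x y : X, G.dist x y = h → ∀ i j : ℕ, i ≤ D → j ≤ D →
      (∑ ξ ∈ Finset.univ.filter (fun ξ : X => G.dist x ξ = i ∧ G.dist y ξ = j), Ecol (E 1) ξ)
        = (((p h i j : ℝ) * ((θs 0 * θs i - θs h * θs j) / (θs 0 ^ 2 - θs h ^ 2)) : ℝ) : ℂ)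
            • Ecol (E 1) x
          + (((p h i j : ℝ) * ((θs 0 * θs j - θs h * θs i) / (θs 0 ^ 2 - θs h ^ 2)) : ℝ) : ℂ)
            • Ecol (E 1) y := by
  intro h h1 hhD x y hxy i j hi hj
  have hD1 : (1:ℕ) ≤ D := by omega
  have hhle : h ≤ D := by omega
  have hcard : (Fintype.card X : ℂ) ≠ 0 := by
    have : (0:ℕ) < Fintype.card X := by omega
    exact_mod_cast Nat.cast_ne_zero.mpr this.ne'
  have hcinv : ((Fintype.card X : ℂ))⁻¹ ≠ 0 := inv_ne_zero hcard
  set c : ℂ := (Fintype.card X : ℂ)⁻¹ with hc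
  have hentry : ∀ a b : X, E 1 a b = c * (θs (G.dist a b) : ℂ) := by
    intro a b
    have hmem : G.dist a b ∈ Finset.range (D+1) := by
      simp only [Finset.mem_range, Nat.lt_succ_iff]; exact hdle a b
    rw [hdual]
    simp only [Matrix.smul_apply, Matrix.sum_apply, distMat, Matrix.of_apply,
      smul_eq_mul, mul_ite, mul_one, mul_zero]
    rw [Finset.sum_ite_eq (Finset.range (D+1)) (G.dist a b) (fun i => (θs i : ℂ)),
      if_pos hmem]
  have hsymm : ∀ a b : X, E 1 a b = E 1 b a := by
    intro a b; rw [hentry, hentry, SimpleGraph.dist_comm]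
  have hEE : E 1 * E 1 = E 1 := by simpa using hidem 1 1 hD1 hD1
  have hpair : ∀ a b : X, (∑ ξ : X, E 1 ξ a * E 1 ξ b) = E 1 a b := by
    intro a b
    calc (∑ ξ : X, E 1 ξ a * E 1 ξ b) = ∑ ξ : X, E 1 a ξ * E 1 ξ b :=
          Finset.sum_congr rfl fun ξ _ => by rw [hsymm ξ a]
      _ = (E 1 * E 1) a b := (Matrix.mul_apply).symm
      _ = E 1 a b := by rw [hEE]
  set F := Finset.univ.filter (fun ξ : X => G.dist x ξ = i ∧ G.dist y ξ = j) with hF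
  obtain ⟨α, β, hS⟩ :=
    Submodule.mem_span_pair.mp (hsb h h1 hhD x y hxy i j hi hj)
  have hL : ∀ a : X, (∑ ξ : X, E 1 ξ a * (∑ ζ ∈ F, Ecol (E 1) ζ) ξ)
      = ∑ ζ ∈ F, E 1 a ζ := by
    intro a
    simp only [Finset.sum_apply, Ecol, Finset.mul_sum]
    rw [Finset.sum_comm]
    exact Finset.sum_congr rfl fun ζ _ => hpair a ζ
  have hR : ∀ a : X, (∑ ξ : X, E 1 ξ a * (α • Ecol (E 1) x + β • Ecol (E 1) y) ξ)
      = α * E 1 a x + β * E 1 a y := by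
    intro a
    simp only [Pi.add_apply, Pi.smul_apply, Ecol, smul_eq_mul, mul_add, Finset.sum_add_distrib]
    rw [← hpair a x, ← hpair a y, Finset.mul_sum, Finset.mul_sum]
    congr 1 <;> exact Finset.sum_congr rfl fun ξ _ => by ring
  have hcombo : ∀ a : X, α * E 1 a x + β * E 1 a y = ∑ ζ ∈ F, E 1 a ζ := by
    intro a
    rw [← hR a, ← hL a, hS]
  have hcardF : F.card = p h i j := hreg h i j hhle hi hj x y hxy
  have sumx : ∑ ζ ∈ F, E 1 x ζ = (p h i j : ℂ) * (c * (θs i : ℂ)) := by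
    rw [Finset.sum_congr rfl (fun ζ hζ => by
      rw [hentry, ((Finset.mem_filter.mp hζ).2).1]),
      Finset.sum_const, hcardF, nsmul_eq_mul]
  have sumy : ∑ ζ ∈ F, E 1 y ζ = (p h i j : ℂ) * (c * (θs j : ℂ)) := by
    rw [Finset.sum_congr rfl (fun ζ hζ => by
      rw [hentry, ((Finset.mem_filter.mp hζ).2).2]),
      Finset.sum_const, hcardF, nsmul_eq_mul]
  have ex : α * (c * (θs 0 : ℂ)) + β * (c * (θs h : ℂ))
      = (p h i j : ℂ) * (c * (θs i : ℂ)) := by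
    have := (hcombo x).trans sumx
    rwa [hentry x x, hentry x y, SimpleGraph.dist_self, hxy] at this
  have ey : α * (c * (θs h : ℂ)) + β * (c * (θs 0 : ℂ))
      = (p h i j : ℂ) * (c * (θs j : ℂ)) := by
    have := (hcombo y).trans sumy
    rwa [hentry y x, hentry y y, SimpleGraph.dist_self, SimpleGraph.dist_comm, hxy] at this
  have eqx : α * (θs 0 : ℂ) + β * (θs h : ℂ) = (p h i j : ℂ) * (θs i : ℂ) := by
    apply mul_left_cancel₀ hcinv
    linear_combination ex
  have eqy : α * (θs h : ℂ) + β * (θs 0 : ℂ) = (p h i j : ℂ) * (θs j : ℂ) := by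
    apply mul_left_cancel₀ hcinv
    linear_combination ey
  have hden : θs 0 ^ 2 - θs h ^ 2 ≠ 0 := by
    obtain ⟨hb1, hb2⟩ := hbnd h h1 hhD
    nlinarith
  have hdenC : ((θs 0 : ℂ)) ^ 2 - (θs h : ℂ) ^ 2 ≠ 0 := by
    intro hcon
    apply hden
    have : (((θs 0 ^ 2 - θs h ^ 2 : ℝ)) : ℂ) = 0 := by push_cast; linear_combination hcon
    exact_mod_cast this
  have hα : α = (((p h i j : ℝ) * ((θs 0 * θs i - θs h * θs j) / (θs 0 ^ 2 - θs h ^ 2)) : ℝ) : ℂ) := by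
    push_cast
    field_simp
    linear_combination (θs 0 : ℂ) * eqx - (θs h : ℂ) * eqy
  have hβ : β = (((p h i j : ℝ) * ((θs 0 * θs j - θs h * θs i) / (θs 0 ^ 2 - θs h ^ 2)) : ℝ) : ℂ) := by
    push_cast
    field_simp
    linear_combination (θs 0 : ℂ) * eqy - (θs h : ℂ) * eqx
  rw [hα, hβ] at hS
  exact hS.symm
end
end

section
/- Fix vertices x,y,z ∈ X, set h = ∂(y,z), i = ∂(z,x), j = ∂(x,y), and assume 1 ≤ i,j ≤ D−1. Then: (1) θ*_{j−1}|Γ(x)∩Γ_{i−1}(z)∩Γ_{j−1}(y)| + θ*_{j+1}|Γ(x)∩Γ_{i−1}(z)∩Γ_{j+1}(y)| = c_i θ*_j (θ*_0θ*_1 − θ*_{i−1}θ*_i)/(θ*_0² − θ*_i²) + c_i θ*_h (θ*_0θ*_{i−1} − θ*_1θ*_i)/(θ*_0² − θ*_i²); (2) θ*_{i−1}|Γ(x)∩Γ_{i−1}(z)∩Γ_{j−1}(y)| + θ*_{i+1}|Γ(x)∩Γ_{i+1}(z)∩Γ_{j−1}(y)| = c_j θ*_i (θ*_0θ*_1 −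 θ*_{j−1}θ*_j)/(θ*_0² − θ*_j²) + c_j θ*_h (θ*_0θ*_{j−1} − θ*_1θ*_j)/(θ*_0² − θ*_j²); (3) θ*_{j−1}|Γ(x)∩Γ_{i+1}(z)∩Γ_{j−1}(y)| + θ*_{j+1}|Γ(x)∩Γ_{i+1}(z)∩Γ_{j+1}(y)| = b_i θ*_j (θ*_0θ*_1 − θ*_{i+1}θ*_i)/(θ*_0² − θ*_i²) + b_i θ*_h (θ*_0θ*_{i+1} − θ*_1θ*_i)/(θ*_0² − θ*_i²); (4) θ*_{i−1}|Γ(x)∩Γ_{i−1}(z)∩Γ_{j+1}(y)| + θ*_{i+1}|Γ(x)∩Γ_{i+1}(z)∩Γ_{j+1}(y)| = b_j θ*_i (θ*_0θ*_1 − θ*_{j+1}θ*_j)/(θ*_0² − θ*_j²) + b_j θ*_h (θ*_0θ*_{j+1} − θ*_1θ*_j)/(θ*_0² − θ*_j²). -/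
open Finset

noncomputable section

/-- The triple intersection `Γ(x) ∩ Γ_a(z) ∩ Γ_b(y)` (empty for `a` or `b` outside `[0,D]`). -/
def tripleInt {X : Type} [Fintype X] (G : SimpleGraph X) (x z y : X) (a b : ℤ) : Finset X :=
  Finset.univ.filter (fun ξ : X => G.dist x ξ = 1 ∧ (G.dist z ξ : ℤ) = a ∧ (G.dist y ξ : ℤ) = b)

/-- `c_i = p^i_{1,i-1}`, with the convention `c_0 = 0`. -/
def cpar (p : ℕ → ℕ → ℕ → ℕ) (i : ℕ) : ℕ := if i = 0 then 0 else p i 1 (i - 1)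

/-- `b_i = p^i_{1,i+1}`, with the convention `b_D = 0`. -/
def bpar (D : ℕ) (p : ℕ → ℕ → ℕ → ℕ) (i : ℕ) : ℕ := if i = D then 0 else p i 1 (i + 1)

theorem key_lemma
    {X : Type} [Fintype X] [DecidableEq X] (G : SimpleGraph X)
    (hX : 2 ≤ Fintype.card X) (hconn : G.Connected)
    (D : ℕ) (hD : 3 ≤ D)
    (hdle : ∀ x y : X, G.dist x y ≤ D)
    (p : ℕ → ℕ → ℕ → ℕ)
    (hreg : ∀ h i j : ℕ, h ≤ D → i ≤ D → j ≤ D → ∀ x y : X, G.dist x y = h →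
      (Finset.univ.filter (fun ξ : X => G.dist x ξ = i ∧ G.dist y ξ = j)).card = p h i j)
    (hbip : ∀ i : ℕ, i ≤ D → p i 1 i = 0)
    (E : ℕ → Matrix X X ℂ)
    (θs : ℕ → ℝ)
    (hdual : E 1 = (Fintype.card X : ℂ)⁻¹ • ∑ i ∈ Finset.range (D + 1), (θs i : ℂ) • distMat G i)
    (hbnd : ∀ i : ℕ, 1 ≤ i → i ≤ D - 1 → -θs 0 < θs i ∧ θs i < θs 0)
    (hsb : ∀ h : ℕ, 1 ≤ h → h ≤ D - 1 → ∀ x y : X, G.dist x y = h → ∀ i j : ℕ, i ≤ D → j ≤ D →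
      (∑ ξ ∈ Finset.univ.filter (fun ξ : X => G.dist x ξ = i ∧ G.dist y ξ = j), Ecol (E 1) ξ)
        ∈ Submodule.span ℂ ({Ecol (E 1) x, Ecol (E 1) y} : Set (X → ℂ)))
    (x u w : X) (e : ℕ) (he : e ≤ D)
    (hu1 : 1 ≤ G.dist x u) (huD : G.dist x u ≤ D - 1)
    (hw1 : 1 ≤ G.dist x w) (hwD : G.dist x w ≤ D - 1) :
    θs (G.dist x w - 1) *
        ((Finset.univ.filter (fun ξ : X => G.dist x ξ = 1 ∧ G.dist u ξ = e ∧
            G.dist w ξ = G.dist x w - 1)).card : ℝ)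
      + θs (G.dist x w + 1) *
        ((Finset.univ.filter (fun ξ : X => G.dist x ξ = 1 ∧ G.dist u ξ = e ∧
            G.dist w ξ = G.dist x w + 1)).card : ℝ)
    = (p (G.dist x u) 1 e : ℝ) * θs (G.dist x w)
        * ((θs 0 * θs 1 - θs e * θs (G.dist x u)) / (θs 0 ^ 2 - θs (G.dist x u) ^ 2))
      + (p (G.dist x u) 1 e : ℝ) * θs (G.dist w u)
        * ((θs 0 * θs e - θs 1 * θs (G.dist x u)) / (θs 0 ^ 2 - θs (G.dist x u) ^ 2)) := by
  set du := G.dist x u with hdu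
  set dw := G.dist x w with hdw
  have hκ : ((Fintype.card X : ℂ))⁻¹ ≠ 0 := inv_ne_zero (Nat.cast_ne_zero.mpr (by omega))
  have hEnt : ∀ a b : X, E 1 a b = (Fintype.card X : ℂ)⁻¹ * (θs (G.dist a b) : ℂ) := by
    intro a b
    rw [hdual]
    simp only [Matrix.smul_apply, Matrix.sum_apply, smul_eq_mul, distMat, Matrix.of_apply,
      mul_ite, mul_one, mul_zero]
    congr 1
    rw [Finset.sum_ite_eq (Finset.range (D + 1)) (G.dist a b) (fun k => (θs k : ℂ)),
      if_pos (Finset.mem_range.mpr (by have := hdle a b; omega))]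
  set S := Finset.univ.filter (fun ξ : X => G.dist x ξ = 1 ∧ G.dist u ξ = e) with hS
  have hcardS : S.card = p du 1 e := hreg du 1 e (by omega) (by omega) he x u hdu.symm
  have hmem := hsb du hu1 huD x u hdu.symm 1 e (by omega) he
  rw [← hS, Submodule.mem_span_pair] at hmem
  obtain ⟨a, b, hab⟩ := hmem
  have heval : ∀ c : X, a * (θs (G.dist c x) : ℂ) + b * (θs (G.dist c u) : ℂ)
      = ∑ ξ ∈ S, (θs (G.dist c ξ) : ℂ) := by
    intro c
    have h1 := congrFun hab c
    simp only [Pi.add_apply, Pi.smul_apply, Finset.sum_apply, Ecol, smul_eq_mul, hEnt] at h1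
    rw [← Finset.mul_sum] at h1
    exact mul_left_cancel₀ hκ (by linear_combination h1)
  -- equation at x
  have eq1 : a * (θs 0 : ℂ) + b * (θs du : ℂ) = (p du 1 e : ℂ) * (θs 1 : ℂ) := by
    have h1 := heval x
    have hux : G.dist x u = du := hdu.symm
    rw [SimpleGraph.dist_self, hux] at h1
    rw [h1]
    calc ∑ ξ ∈ S, (θs (G.dist x ξ) : ℂ) = ∑ _ξ ∈ S, ((θs 1 : ℝ) : ℂ) :=
          Finset.sum_congr rfl (fun ξ hξ => by rw [(Finset.mem_filter.mp hξ).2.1])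
      _ = (p du 1 e : ℂ) * (θs 1 : ℂ) := by
          rw [Finset.sum_const, nsmul_eq_mul, hcardS]
  -- equation at u
  have eq2 : a * (θs du : ℂ) + b * (θs 0 : ℂ) = (p du 1 e : ℂ) * (θs e : ℂ) := by
    have h1 := heval u
    have hux : G.dist u x = du := by rw [SimpleGraph.dist_comm]
    rw [SimpleGraph.dist_self, hux] at h1
    rw [h1]
    calc ∑ ξ ∈ S, (θs (G.dist u ξ) : ℂ) = ∑ _ξ ∈ S, ((θs e : ℝ) : ℂ) :=
          Finset.sum_congr rfl (fun ξ hξ => by rw [(Finset.mem_filter.mp hξ).2.2])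
      _ = (p du 1 e : ℂ) * (θs e : ℂ) := by
          rw [Finset.sum_const, nsmul_eq_mul, hcardS]
  -- the middle set is empty
  have hmid : Finset.univ.filter (fun ξ : X => G.dist x ξ = 1 ∧ G.dist w ξ = dw) = ∅ := by
    rw [← Finset.card_eq_zero, hreg dw 1 dw (by omega) (by omega) (by omega) x w hdw.symm]
    exact hbip dw (by omega)
  have hsplit : ∀ ξ ∈ S, G.dist w ξ = dw - 1 ∨ G.dist w ξ = dw + 1 := by
    intro ξ hξ
    obtain ⟨-, h1, -⟩ := Finset.mem_filter.mp hξ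
    have t1 : G.dist w ξ ≤ G.dist w x + G.dist x ξ := hconn.dist_triangle
    have t2 : G.dist w x ≤ G.dist w ξ + G.dist ξ x := hconn.dist_triangle
    have hne : G.dist w ξ ≠ dw := by
      intro hcon
      have hm : ξ ∈ Finset.univ.filter (fun ξ : X => G.dist x ξ = 1 ∧ G.dist w ξ = dw) := by
        simp [h1, hcon]
      rw [hmid] at hm
      exact absurd hm (Finset.notMem_empty ξ)
    have hcx : G.dist ξ x = 1 := by rw [SimpleGraph.dist_comm]; exact h1
    have hwx : G.dist w x = dw := by rw [SimpleGraph.dist_comm]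
    rw [hcx] at t2
    rw [hwx] at t1 t2
    rw [h1] at t1
    omega
  have hffilter : ∀ m : ℕ, S.filter (fun ξ => G.dist w ξ = m)
      = Finset.univ.filter (fun ξ : X => G.dist x ξ = 1 ∧ G.dist u ξ = e ∧ G.dist w ξ = m) := by
    intro m
    rw [hS, Finset.filter_filter]
    exact Finset.filter_congr fun ξ _ => and_assoc
  have hfneg : S.filter (fun ξ => ¬ G.dist w ξ = dw - 1)
      = S.filter (fun ξ => G.dist w ξ = dw + 1) := by
    refine Finset.filter_congr fun ξ hξ => ?_
    rcases hsplit ξ hξ with hc | hc <;> simp [hc] <;> omega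
  have hsumw : ∑ ξ ∈ S, (θs (G.dist w ξ) : ℂ)
      = ((Finset.univ.filter (fun ξ : X => G.dist x ξ = 1 ∧ G.dist u ξ = e ∧
            G.dist w ξ = dw - 1)).card : ℂ) * (θs (dw - 1) : ℂ)
        + ((Finset.univ.filter (fun ξ : X => G.dist x ξ = 1 ∧ G.dist u ξ = e ∧
            G.dist w ξ = dw + 1)).card : ℂ) * (θs (dw + 1) : ℂ) := by
    rw [← Finset.sum_filter_add_sum_filter_not S (fun ξ => G.dist w ξ = dw - 1)]
    congr 1
    · calc ∑ ξ ∈ S.filter (fun ξ => G.dist w ξ = dw - 1), (θs (G.dist w ξ) : ℂ)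
          = ∑ _ξ ∈ S.filter (fun ξ => G.dist w ξ = dw - 1), ((θs (dw - 1) : ℝ) : ℂ) :=
            Finset.sum_congr rfl (fun ξ hξ => by rw [(Finset.mem_filter.mp hξ).2])
        _ = _ := by rw [Finset.sum_const, nsmul_eq_mul, hffilter]
    · rw [hfneg]
      calc ∑ ξ ∈ S.filter (fun ξ => G.dist w ξ = dw + 1), (θs (G.dist w ξ) : ℂ)
          = ∑ _ξ ∈ S.filter (fun ξ => G.dist w ξ = dw + 1), ((θs (dw + 1) : ℝ) : ℂ) :=
            Finset.sum_congr rfl (fun ξ hξ => by rw [(Finset.mem_filter.mp hξ).2])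
        _ = _ := by rw [Finset.sum_const, nsmul_eq_mul, hffilter]
  have eqw : a * (θs dw : ℂ) + b * (θs (G.dist w u) : ℂ)
      = ((Finset.univ.filter (fun ξ : X => G.dist x ξ = 1 ∧ G.dist u ξ = e ∧
            G.dist w ξ = dw - 1)).card : ℂ) * (θs (dw - 1) : ℂ)
        + ((Finset.univ.filter (fun ξ : X => G.dist x ξ = 1 ∧ G.dist u ξ = e ∧
            G.dist w ξ = dw + 1)).card : ℂ) * (θs (dw + 1) : ℂ) := by
    have h1 := heval w
    have hwx : G.dist w x = dw := by rw [SimpleGraph.dist_comm]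
    rw [hwx, hsumw] at h1
    exact h1
  have hbd := hbnd du hu1 huD
  have hdetR : θs 0 ^ 2 - θs du ^ 2 ≠ 0 := ne_of_gt (by nlinarith [sq_lt_sq' hbd.1 hbd.2])
  have hdetC : (θs 0 : ℂ) ^ 2 - (θs du : ℂ) ^ 2 ≠ 0 := by
    intro hcon
    apply hdetR
    have : ((θs 0 ^ 2 - θs du ^ 2 : ℝ) : ℂ) = 0 := by push_cast; linear_combination hcon
    exact_mod_cast this
  have ha : a = (p du 1 e : ℂ) * ((θs 0 : ℂ) * θs 1 - (θs e : ℂ) * θs du)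
      / ((θs 0 : ℂ) ^ 2 - (θs du : ℂ) ^ 2) := by
    rw [eq_div_iff hdetC]
    linear_combination (θs 0 : ℂ) * eq1 - (θs du : ℂ) * eq2
  have hb : b = (p du 1 e : ℂ) * ((θs 0 : ℂ) * θs e - (θs 1 : ℂ) * θs du)
      / ((θs 0 : ℂ) ^ 2 - (θs du : ℂ) ^ 2) := by
    rw [eq_div_iff hdetC]
    linear_combination (θs 0 : ℂ) * eq2 - (θs du : ℂ) * eq1
  rw [ha, hb] at eqw
  have goalC : (θs (dw - 1) : ℂ) *
        ((Finset.univ.filter (fun ξ : X => G.dist x ξ = 1 ∧ G.dist u ξ = e ∧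
            G.dist w ξ = dw - 1)).card : ℂ)
      + (θs (dw + 1) : ℂ) *
        ((Finset.univ.filter (fun ξ : X => G.dist x ξ = 1 ∧ G.dist u ξ = e ∧
            G.dist w ξ = dw + 1)).card : ℂ)
      = (p du 1 e : ℂ) * (θs dw : ℂ)
          * (((θs 0 : ℂ) * θs 1 - (θs e : ℂ) * θs du) / ((θs 0 : ℂ) ^ 2 - (θs du : ℂ) ^ 2))
        + (p du 1 e : ℂ) * (θs (G.dist w u) : ℂ)
          * (((θs 0 : ℂ) * θs e - (θs 1 : ℂ) * θs du) / ((θs 0 : ℂ) ^ 2 - (θs du : ℂ) ^ 2)) := by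
    linear_combination -eqw
  exact_mod_cast goalC

/-- The four weighted counting identities of Lemma `hard` for `1 ≤ i,j ≤ D−1`. -/
theorem stmt4
    {X : Type} [Fintype X] [DecidableEq X] (G : SimpleGraph X)
    (hX : 2 ≤ Fintype.card X) (hconn : G.Connected)
    (D : ℕ) (hD : 3 ≤ D)
    (hdle : ∀ x y : X, G.dist x y ≤ D) (hdeq : ∃ x y : X, G.dist x y = D)
    (p : ℕ → ℕ → ℕ → ℕ)
    (hreg : ∀ h i j : ℕ, h ≤ D → i ≤ D → j ≤ D → ∀ x y : X, G.dist x y = h →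
      (Finset.univ.filter (fun ξ : X => G.dist x ξ = i ∧ G.dist y ξ = j)).card = p h i j)
    (hbip : ∀ i : ℕ, i ≤ D → p i 1 i = 0)
    (hantip : p 0 D D = 1)
    (E : ℕ → Matrix X X ℂ)
    (hE0 : E 0 = (Fintype.card X : ℂ)⁻¹ • Matrix.of (fun _ _ => 1))
    (hidem : ∀ i j : ℕ, i ≤ D → j ≤ D → E i * E j = if i = j then E i else 0)
    (hherm : ∀ i : ℕ, i ≤ D → (E i).IsHermitian)
    (hEsum : ∑ i ∈ Finset.range (D + 1), E i = 1)
    (θ : ℕ → ℝ)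
    (heig : ∀ i : ℕ, i ≤ D → distMat G 1 * E i = (θ i : ℂ) • E i)
    (qK : ℕ → ℕ → ℕ → ℂ)
    (hKrein : ∀ i j : ℕ, i ≤ D → j ≤ D →
      Matrix.hadamard (E i) (E j)
        = (Fintype.card X : ℂ)⁻¹ • ∑ h ∈ Finset.range (D + 1), qK h i j • E h)
    (hQ0 : ∀ h i j : ℕ, h ≤ D → i ≤ D → j ≤ D → (i + j < h ∨ j + h < i ∨ h + i < j) → qK h i j = 0)
    (hQ1 : ∀ h i j : ℕ, h ≤ D → i ≤ D → j ≤ D → (h = i + j ∨ i = j + h ∨ j = h + i) → qK h i j ≠ 0)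
    (θs : ℕ → ℝ)
    (hdual : E 1 = (Fintype.card X : ℂ)⁻¹ • ∑ i ∈ Finset.range (D + 1), (θs i : ℂ) • distMat G i)
    (hsd : ∀ i : ℕ, i ≤ D → θ i = θs i)
    (hpq : ∀ h i j : ℕ, h ≤ D → i ≤ D → j ≤ D → qK h i j = (p h i j : ℂ))
    (hdistinct : ∀ i j : ℕ, i ≤ D → j ≤ D → i ≠ j → θs i ≠ θs j)
    (hbnd : ∀ i : ℕ, 1 ≤ i → i ≤ D - 1 → -θs 0 < θs i ∧ θs i < θs 0)
    (hbD : θs D = -θs 0)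
    (hsb : ∀ h : ℕ, 1 ≤ h → h ≤ D - 1 → ∀ x y : X, G.dist x y = h → ∀ i j : ℕ, i ≤ D → j ≤ D →
      (∑ ξ ∈ Finset.univ.filter (fun ξ : X => G.dist x ξ = i ∧ G.dist y ξ = j), Ecol (E 1) ξ)
        ∈ Submodule.span ℂ ({Ecol (E 1) x, Ecol (E 1) y} : Set (X → ℂ)))
    (x y z : X) (h i j : ℕ)
    (hh : G.dist y z = h) (hi : G.dist z x = i) (hj : G.dist x y = j)
    (hi1 : 1 ≤ i) (hiD : i ≤ D - 1) (hj1 : 1 ≤ j) (hjD : j ≤ D - 1) :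
    θs (j - 1) * ((tripleInt G x z y ((i : ℤ) - 1) ((j : ℤ) - 1)).card : ℝ)
        + θs (j + 1) * ((tripleInt G x z y ((i : ℤ) - 1) ((j : ℤ) + 1)).card : ℝ)
      = (p i 1 (i - 1) : ℝ) * θs j
            * ((θs 0 * θs 1 - θs (i - 1) * θs i) / (θs 0 ^ 2 - θs i ^ 2))
        + (p i 1 (i - 1) : ℝ) * θs h
            * ((θs 0 * θs (i - 1) - θs 1 * θs i) / (θs 0 ^ 2 - θs i ^ 2)) ∧
    θs (i - 1) * ((tripleInt G x z y ((i : ℤ) - 1) ((j : ℤ) - 1)).card : ℝ)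
        + θs (i + 1) * ((tripleInt G x z y ((i : ℤ) + 1) ((j : ℤ) - 1)).card : ℝ)
      = (p j 1 (j - 1) : ℝ) * θs i
            * ((θs 0 * θs 1 - θs (j - 1) * θs j) / (θs 0 ^ 2 - θs j ^ 2))
        + (p j 1 (j - 1) : ℝ) * θs h
            * ((θs 0 * θs (j - 1) - θs 1 * θs j) / (θs 0 ^ 2 - θs j ^ 2)) ∧
    θs (j - 1) * ((tripleInt G x z y ((i : ℤ) + 1) ((j : ℤ) - 1)).card : ℝ)
        + θs (j + 1) * ((tripleInt G x z y ((i : ℤ) + 1) ((j : ℤ) + 1)).card : ℝ)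
      = (p i 1 (i + 1) : ℝ) * θs j
            * ((θs 0 * θs 1 - θs (i + 1) * θs i) / (θs 0 ^ 2 - θs i ^ 2))
        + (p i 1 (i + 1) : ℝ) * θs h
            * ((θs 0 * θs (i + 1) - θs 1 * θs i) / (θs 0 ^ 2 - θs i ^ 2)) ∧
    θs (i - 1) * ((tripleInt G x z y ((i : ℤ) - 1) ((j : ℤ) + 1)).card : ℝ)
        + θs (i + 1) * ((tripleInt G x z y ((i : ℤ) + 1) ((j : ℤ) + 1)).card : ℝ)
      = (p j 1 (j + 1) : ℝ) * θs i
            * ((θs 0 * θs 1 - θs (j + 1) * θs j) / (θs 0 ^ 2 - θs j ^ 2))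
        + (p j 1 (j + 1) : ℝ) * θs h
            * ((θs 0 * θs (j + 1) - θs 1 * θs j) / (θs 0 ^ 2 - θs j ^ 2)) := by
  have hxz : G.dist x z = i := by rw [SimpleGraph.dist_comm]; exact hi
  have hzy : G.dist z y = h := by rw [SimpleGraph.dist_comm]; exact hh
  have htri : ∀ (a b : ℤ) (a' b' : ℕ), a = (a' : ℤ) → b = (b' : ℤ) →
      (tripleInt G x z y a b).card
        = (Finset.univ.filter (fun ξ : X => G.dist x ξ = 1 ∧ G.dist z ξ = a' ∧
            G.dist y ξ = b')).card := by
    intro a b a' b' ha hb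
    unfold tripleInt
    congr 1
    refine Finset.filter_congr fun ξ _ => ?_
    constructor
    · rintro ⟨h1, h2, h3⟩; exact ⟨h1, by omega, by omega⟩
    · rintro ⟨h1, h2, h3⟩; exact ⟨h1, by omega, by omega⟩
  have htri2 : ∀ (a b : ℤ) (a' b' : ℕ), a = (a' : ℤ) → b = (b' : ℤ) →
      (tripleInt G x z y a b).card
        = (Finset.univ.filter (fun ξ : X => G.dist x ξ = 1 ∧ G.dist y ξ = b' ∧
            G.dist z ξ = a')).card := by
    intro a b a' b' ha hb
    unfold tripleInt
    congr 1
    refine Finset.filter_congr fun ξ _ => ?_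
    constructor
    · rintro ⟨h1, h2, h3⟩; exact ⟨h1, by omega, by omega⟩
    · rintro ⟨h1, h2, h3⟩; exact ⟨h1, by omega, by omega⟩
  refine ⟨?_, ?_, ?_, ?_⟩
  · have k1 := key_lemma G hX hconn D hD hdle p hreg hbip E θs hdual hbnd hsb x z y (i - 1)
      (by omega) (by rw [hxz]; omega) (by rw [hxz]; omega) (by rw [hj]; omega) (by rw [hj]; omega)
    simp only [hxz, hj, hh] at k1
    rw [htri ((i : ℤ) - 1) ((j : ℤ) - 1) (i - 1) (j - 1) (by omega) (by omega),
      htri ((i : ℤ) - 1) ((j : ℤ) + 1) (i - 1) (j + 1) (by omega) (by omega)]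
    exact k1
  · have k2 := key_lemma G hX hconn D hD hdle p hreg hbip E θs hdual hbnd hsb x y z (j - 1)
      (by omega) (by rw [hj]; omega) (by rw [hj]; omega) (by rw [hxz]; omega) (by rw [hxz]; omega)
    simp only [hxz, hj, hzy] at k2
    rw [htri2 ((i : ℤ) - 1) ((j : ℤ) - 1) (i - 1) (j - 1) (by omega) (by omega),
      htri2 ((i : ℤ) + 1) ((j : ℤ) - 1) (i + 1) (j - 1) (by omega) (by omega)]
    exact k2
  · have k3 := key_lemma G hX hconn D hD hdle p hreg hbip E θs hdual hbnd hsb x z y (i + 1)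
      (by omega) (by rw [hxz]; omega) (by rw [hxz]; omega) (by rw [hj]; omega) (by rw [hj]; omega)
    simp only [hxz, hj, hh] at k3
    rw [htri ((i : ℤ) + 1) ((j : ℤ) - 1) (i + 1) (j - 1) (by omega) (by omega),
      htri ((i : ℤ) + 1) ((j : ℤ) + 1) (i + 1) (j + 1) (by omega) (by omega)]
    exact k3
  · have k4 := key_lemma G hX hconn D hD hdle p hreg hbip E θs hdual hbnd hsb x y z (j + 1)
      (by omega) (by rw [hj]; omega) (by rw [hj]; omega) (by rw [hxz]; omega) (by rw [hxz]; omega)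
    simp only [hxz, hj, hzy] at k4
    rw [htri2 ((i : ℤ) - 1) ((j : ℤ) + 1) (i - 1) (j + 1) (by omega) (by omega),
      htri2 ((i : ℤ) + 1) ((j : ℤ) + 1) (i + 1) (j + 1) (by omega) (by omega)]
    exact k4
end
end

section
/- Let W be a ℂ-vector space, let q, H be nonzero complex numbers, and let A^{(1)}, A^{(2)}, A^{(3)}, A^{*(1)}, A^{*(2)}, A^{*(3)} ∈ End(W) satisfy: [A^{(i)}, A^{(j)}] = 0 and [A^{*(i)}, A^{*(j)}] = 0 for distinct i,j ∈ {1,2,3}; [A^{(i)}, A^{*(i)}] = 0 for i ∈ {1,2,3}; for distinct i,j ∈ {1,2,3}, A^{(i)2}A^{*(j)} − (q²+q^{−2})A^{(i)}A^{*(j)}A^{(i)} + A^{*(j)}A^{(i)2} = −H²(q²−q^{−2})² A^{*(j)} and A^{*(j)2}A^{(i)} − (q²+q^{−2})A^{*(j)}A^{(i)}A^{*(j)} + A^{(i)}A^{*(j)2} = −H²(q²−q^{−2})² A^{(i)}; and for mutually distinct h,i,j ∈ {1,2,3}, [A^{(h)}, [A^{*(i)}, A^{(j)}]_q]_q = [A^{*(h)},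 [A^{(i)}, A^{*(j)}]_q]_q. Then for all mutually distinct h,i,j ∈ {1,2,3}: H⁴(q²−q^{−2})⁴ A^{(h)} = [A^{*(i)}, [A^{(j)}, [A^{*(h)}, [A^{(i)}, A^{*(j)}]_q]_q]_q]_q and H⁴(q²−q^{−2})⁴ A^{*(h)} = [A^{(i)}, [A^{*(j)}, [A^{(h)}, [A^{*(i)}, A^{(j)}]_q]_q]_q]_q. -/
noncomputable section

/-- The `q`-commutator `[R,S]_q = qRS − q⁻¹SR` of endomorphisms. -/
def qcommE {W : Type*} [AddCommGroup W] [Module ℂ W] (q : ℂ) (R S : Module.End ℂ W) :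
    Module.End ℂ W :=
  q • (R * S) - q⁻¹ • (S * R)

set_option linter.unnecessarySeqFocus false in
/-- Key computation: if `x` commutes with `v`, and the Askey–Wilson relations hold for the
pairs `(u,x)` and `(v,u)`, then the fourfold `q`-commutator recovers `x`. -/
lemma keyLemma15 {W : Type*} [AddCommGroup W] [Module ℂ W] (q e : ℂ) (hq : q ≠ 0)
    (x u v : Module.End ℂ W)
    (hvx : v * x - x * v = 0)
    (hux : u ^ 2 * x - (q ^ 2 + q⁻¹ ^ 2) • (u * x * u) + x * u ^ 2 = e • x)
    (hvu : v ^ 2 * u - (q ^ 2 + q⁻¹ ^ 2) • (v * u * v) + u * v ^ 2 = e • u) :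
    qcommE q u (qcommE q v (qcommE q x (qcommE q u v))) = (e ^ 2) • x := by
  have E2 : u ^ 2 * x - (q ^ 2 + q⁻¹ ^ 2) • (u * x * u) + x * u ^ 2 - e • x = 0 :=
    sub_eq_zero_of_eq hux
  have E3 : v ^ 2 * u - (q ^ 2 + q⁻¹ ^ 2) • (v * u * v) + u * v ^ 2 - e • u = 0 :=
    sub_eq_zero_of_eq hvu
  have cert : qcommE q u (qcommE q v (qcommE q x (qcommE q u v)))
      = (e ^ 2) • x
        + (q⁻¹ ^ 2) • (u * (v * (u * (v * x - x * v))))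
        + (u * ((v ^ 2 * u - (q ^ 2 + q⁻¹ ^ 2) • (v * u * v) + u * v ^ 2 - e • u) * x))
        - (u * (u * (v * (v * x - x * v))))
        + (q ^ 4) • (u * ((v * x - x * v) * (u * v)))
        - (q ^ 2) • (u * ((v * x - x * v) * (v * u)))
        - (q ^ 2) • (u * (x * (v ^ 2 * u - (q ^ 2 + q⁻¹ ^ 2) • (v * u * v) + u * v ^ 2 - e • u)))
        - (q⁻¹ ^ 4) • (v * (u * ((v * x - x * v) * u)))
        - (q⁻¹ ^ 2) • ((v ^ 2 * u - (q ^ 2 + q⁻¹ ^ 2) • (v * u * v) + u * v ^ 2 - e • u) * (x * u))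
        + (q⁻¹ ^ 2) • (u * (v * ((v * x - x * v) * u)))
        - (q ^ 2) • ((v * x - x * v) * (u * (v * u)))
        + ((v * x - x * v) * (v * (u * u)))
        + e • (u ^ 2 * x - (q ^ 2 + q⁻¹ ^ 2) • (u * x * u) + x * u ^ 2 - e • x)
        + (x * ((v ^ 2 * u - (q ^ 2 + q⁻¹ ^ 2) • (v * u * v) + u * v ^ 2 - e • u) * u)) := by
    unfold qcommE
    simp only [pow_two, mul_add, add_mul, mul_sub, sub_mul, smul_add, smul_sub,
      smul_smul, mul_smul_comm, smul_mul_assoc, mul_assoc]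
    match_scalars <;> field_simp <;> (try ring1) <;> (rw [eq_div_iff (by simp [hq])]; ring1)
  rw [cert, hvx, E2, E3]
  simp

/-- If six endomorphisms `A^{(1)},A^{(2)},A^{(3)},A^{*(1)},A^{*(2)},A^{*(3)}` of a complex
vector space satisfy the commutation, Askey–Wilson and mixed `q`-Serre relations, then each
of them can be recovered from the other five via iterated `q`-commutators. -/
theorem stmt15 {W : Type*} [AddCommGroup W] [Module ℂ W] (q H : ℂ) (hq : q ≠ 0) (hH : H ≠ 0)
    (A S : Fin 3 → Module.End ℂ W)
    (h1 : ∀ i j : Fin 3, i ≠ j → A i * A j - A j * A i = 0)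
    (h2 : ∀ i j : Fin 3, i ≠ j → S i * S j - S j * S i = 0)
    (h3 : ∀ i : Fin 3, A i * S i - S i * A i = 0)
    (h4 : ∀ i j : Fin 3, i ≠ j →
      A i ^ 2 * S j - (q ^ 2 + q ^ (-2 : ℤ)) • (A i * S j * A i) + S j * A i ^ 2
        = (-(H ^ 2) * (q ^ 2 - q ^ (-2 : ℤ)) ^ 2) • S j)
    (h5 : ∀ i j : Fin 3, i ≠ j →
      S j ^ 2 * A i - (q ^ 2 + q ^ (-2 : ℤ)) • (S j * A i * S j) + A i * S j ^ 2
        = (-(H ^ 2) * (q ^ 2 - q ^ (-2 : ℤ)) ^ 2) • A i)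
    (h6 : ∀ h i j : Fin 3, h ≠ i → i ≠ j → h ≠ j →
      qcommE q (A h) (qcommE q (S i) (A j)) = qcommE q (S h) (qcommE q (A i) (S j))) :
    ∀ h i j : Fin 3, h ≠ i → i ≠ j → h ≠ j →
      (H ^ 4 * (q ^ 2 - q ^ (-2 : ℤ)) ^ 4) • A h
          = qcommE q (S i) (qcommE q (A j) (qcommE q (S h) (qcommE q (A i) (S j)))) ∧
      (H ^ 4 * (q ^ 2 - q ^ (-2 : ℤ)) ^ 4) • S h
          = qcommE q (A i) (qcommE q (S j) (qcommE q (A h) (qcommE q (S i) (A j)))) := by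
  have hz : q ^ (-2 : ℤ) = q⁻¹ ^ 2 := by
    rw [zpow_neg, inv_pow]
    norm_cast
  simp only [hz] at h4 h5
  intro h i j hhi hij hhj
  have escalar : H ^ 4 * (q ^ 2 - q⁻¹ ^ 2) ^ 4
      = (-(H ^ 2) * (q ^ 2 - q⁻¹ ^ 2) ^ 2) ^ 2 := by ring
  constructor
  · rw [← h6 h i j hhi hij hhj, hz, escalar]
    exact (keyLemma15 q _ hq (A h) (S i) (A j) (h1 j h (Ne.symm hhj))
      (h5 h i hhi) (h4 j i (Ne.symm hij))).symm
  · rw [h6 h i j hhi hij hhj, hz, escalar]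
    exact (keyLemma15 q _ hq (S h) (A i) (S j) (h2 j h (Ne.symm hhj))
      (h4 i h (Ne.symm hhi)) (h5 i j hij)).symm
end
end

section
/- Let n ≥ 4, let q be a nonzero complex number, let A be an associative ℂ-algebra, and let I_{i,j} ∈ A for distinct i,j ∈ {1,…,n} satisfy: (a) I_{i,j} = −I_{j,i} for all distinct i,j; (b) [I_{h,i}, I_{i,j}]_q = −I_{j,h} whenever the sequence h,i,j runs clockwise, and [I_{h,i}, I_{i,j}]_{q^{−1}} = −I_{j,h} whenever h,i,j runs counter-clockwise; (c) [I_{h,i}, I_{j,k}] = 0 whenever the diagonals of the n-gon joining h,i and joining j,k do not overlap. Set B_i = I_{i,i+1} for 1 ≤ i ≤ n−1 and B_n = I_{n,1}. Then: (i) for i ∈ {1, n−1}, B_i²B_n − (q²+q^{−2})B_iB_nB_i + B_nB_i² = −B_n and B_n²B_i − (q²+q^{−2})B_nB_iB_n + B_iB_n² = −B_i; (ii) [B_n, B_i] = 0 for 2 ≤ i ≤ n−2. -/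
noncomputable section

/-- In a regular `n`-gon with vertices labeled clockwise `1,…,n`, the sequence `h,i,j` of
mutually distinct vertices runs clockwise iff, walking clockwise from `h`, one meets `i`
before `j` (positions measured relative to `h`). -/
def cw3 (n h i j : ℕ) : Prop := (i + n - h) % n < (j + n - h) % n

/-- The diagonals `h̄i` and `j̄k` of the `n`-gon (on mutually distinct vertices) do not
overlap: it is not the case that exactly one of `j,k` lies on the clockwise arc from `h`
to `i`. -/
def diagNonOverlap (n h i j k : ℕ) : Prop :=
  ¬ (((j + n - h) % n < (i + n - h) % n ∧ (i + n - h) % n < (k + n - h) % n) ∨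
     ((k + n - h) % n < (i + n - h) % n ∧ (i + n - h) % n < (j + n - h) % n))

lemma keylem {A : Type*} [Ring A] [Algebra ℂ A] (q : ℂ) (hq : q ≠ 0) (X Y Z : A)
    (h1 : q • (X * Y) - q⁻¹ • (Y * X) = -Z)
    (h2 : q • (Y * Z) - q⁻¹ • (Z * Y) = -X)
    (h3 : q • (Z * X) - q⁻¹ • (X * Z) = -Y) :
    (Y ^ 2 * X - (q ^ 2 + q ^ (-2 : ℤ)) • (Y * X * Y) + X * Y ^ 2 = -X) ∧
    (X ^ 2 * Y - (q ^ 2 + q ^ (-2 : ℤ)) • (X * Y * X) + Y * X ^ 2 = -Y) := by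
  have hq2 : q ^ (-2 : ℤ) = q⁻¹ * q⁻¹ := by
    rw [zpow_neg, zpow_two, mul_inv_rev]
  have hZ : Z = q⁻¹ • (Y * X) - q • (X * Y) := by
    have := congrArg Neg.neg h1
    simpa [neg_sub] using this.symm
  subst hZ
  rw [hq2]
  constructor
  · rw [← h2]
    simp only [smul_sub, mul_sub, sub_mul, mul_smul_comm, smul_mul_assoc, smul_smul,
      mul_assoc, pow_two]
    match_scalars <;> (field_simp; try ring)
  · rw [← h3]
    simp only [smul_sub, mul_sub, sub_mul, mul_smul_comm, smul_mul_assoc, smul_smul,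
      mul_assoc, pow_two]
    match_scalars <;> (field_simp; try ring)

lemma modh (n a r : ℕ) (hr : r < n) (h : a = r ∨ a = n + r) : a % n = r := by
  rcases h with h | h
  · subst h; exact Nat.mod_eq_of_lt hr
  · subst h; rw [Nat.add_mod_left]; exact Nat.mod_eq_of_lt hr

/-- Gavrilik–Klimyk relations: if the elements `I_{i,j}` satisfy the antisymmetry,
`q`-commutator and non-overlapping-commutation relations, then the elements
`B_i = I_{i,i+1}` `(1 ≤ i ≤ n−1)` and `B_n = I_{n,1}` satisfy the `U'_q(so_n)` relations
involving `B_n`. -/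
theorem stmt16 {A : Type*} [Ring A] [Algebra ℂ A] (n : ℕ) (hn : 4 ≤ n)
    (q : ℂ) (hq : q ≠ 0)
    (I : ℕ → ℕ → A)
    (ha : ∀ i j : ℕ, 1 ≤ i → i ≤ n → 1 ≤ j → j ≤ n → i ≠ j → I i j = - I j i)
    (hb1 : ∀ h i j : ℕ, 1 ≤ h → h ≤ n → 1 ≤ i → i ≤ n → 1 ≤ j → j ≤ n →
      h ≠ i → i ≠ j → h ≠ j → cw3 n h i j →
      q • (I h i * I i j) - q⁻¹ • (I i j * I h i) = - I j h)
    (hb2 : ∀ h i j : ℕ, 1 ≤ h → h ≤ n → 1 ≤ i → i ≤ n → 1 ≤ j → j ≤ n →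
      h ≠ i → i ≠ j → h ≠ j → cw3 n j i h →
      q⁻¹ • (I h i * I i j) - q • (I i j * I h i) = - I j h)
    (hc : ∀ h i j k : ℕ, 1 ≤ h → h ≤ n → 1 ≤ i → i ≤ n → 1 ≤ j → j ≤ n → 1 ≤ k → k ≤ n →
      h ≠ i → h ≠ j → h ≠ k → i ≠ j → i ≠ k → j ≠ k → diagNonOverlap n h i j k →
      I h i * I j k - I j k * I h i = 0) :
    (∀ i : ℕ, (i = 1 ∨ i = n - 1) →
      (I i (i + 1)) ^ 2 * I n 1 - (q ^ 2 + q ^ (-2 : ℤ)) • (I i (i + 1) * I n 1 * I i (i + 1))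
          + I n 1 * (I i (i + 1)) ^ 2 = -(I n 1) ∧
      (I n 1) ^ 2 * I i (i + 1) - (q ^ 2 + q ^ (-2 : ℤ)) • (I n 1 * I i (i + 1) * I n 1)
          + I i (i + 1) * (I n 1) ^ 2 = -(I i (i + 1))) ∧
    (∀ i : ℕ, 2 ≤ i → i ≤ n - 2 → I n 1 * I i (i + 1) - I i (i + 1) * I n 1 = 0) := by
  constructor
  · rintro i (rfl | rfl)
    · -- case i = 1
      have c1 : cw3 n n 1 2 := by
        unfold cw3
        rw [modh n (1 + n - n) 1 (by omega) (by omega),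
            modh n (2 + n - n) 2 (by omega) (by omega)]
        omega
      have c2 : cw3 n 1 2 n := by
        unfold cw3
        rw [modh n (2 + n - 1) 1 (by omega) (by omega),
            modh n (n + n - 1) (n - 1) (by omega) (by omega)]
        omega
      have c3 : cw3 n 2 n 1 := by
        unfold cw3
        rw [modh n (n + n - 2) (n - 2) (by omega) (by omega),
            modh n (1 + n - 2) (n - 1) (by omega) (by omega)]
        omega
      have h1 := hb1 n 1 2 (by omega) le_rfl (by omega) (by omega) (by omega) (by omega)
        (by omega) (by omega) (by omega) c1
      have h2 := hb1 1 2 n (by omega) (by omega) (by omega) (by omega) (by omega) le_rfl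
        (by omega) (by omega) (by omega) c2
      have h3 := hb1 2 n 1 (by omega) (by omega) (by omega) le_rfl (by omega) (by omega)
        (by omega) (by omega) (by omega) c3
      have K := keylem q hq (I n 1) (I 1 2) (I 2 n) h1 h2 h3
      norm_num
      exact K
    · -- case i = n - 1
      rw [show n - 1 + 1 = n from by omega]
      have c1 : cw3 n (n - 1) n 1 := by
        unfold cw3
        rw [modh n (n + n - (n - 1)) 1 (by omega) (by omega),
            modh n (1 + n - (n - 1)) 2 (by omega) (by omega)]
        omega
      have c2 : cw3 n n 1 (n - 1) := by
        unfold cw3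
        rw [modh n (1 + n - n) 1 (by omega) (by omega),
            modh n (n - 1 + n - n) (n - 1) (by omega) (by omega)]
        omega
      have c3 : cw3 n 1 (n - 1) n := by
        unfold cw3
        rw [modh n (n - 1 + n - 1) (n - 2) (by omega) (by omega),
            modh n (n + n - 1) (n - 1) (by omega) (by omega)]
        omega
      have h1 := hb1 (n - 1) n 1 (by omega) (by omega) (by omega) le_rfl (by omega) (by omega)
        (by omega) (by omega) (by omega) c1
      have h2 := hb1 n 1 (n - 1) (by omega) le_rfl (by omega) (by omega) (by omega) (by omega)
        (by omega) (by omega) (by omega) c2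
      have h3 := hb1 1 (n - 1) n (by omega) (by omega) (by omega) (by omega) (by omega) le_rfl
        (by omega) (by omega) (by omega) c3
      have K := keylem q hq (I (n - 1) n) (I n 1) (I 1 (n - 1)) h1 h2 h3
      exact ⟨K.2, K.1⟩
  · intro i hi2 hin
    have hd : diagNonOverlap n n 1 i (i + 1) := by
      unfold diagNonOverlap
      rw [modh n (1 + n - n) 1 (by omega) (by omega),
          modh n (i + n - n) i (by omega) (by omega),
          modh n (i + 1 + n - n) (i + 1) (by omega) (by omega)]
      omega
    exact hc n 1 i (i + 1) (by omega) le_rfl (by omega) (by omega) (by omega) (by omega)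
      (by omega) (by omega) (by omega) (by omega) (by omega) (by omega) (by omega) (by omega) hd
end
end

section
/- The only subspaces of Λ that are invariant under all six maps A^{(1)}, A^{(2)}, A^{(3)}, A^{*(1)}, A^{*(2)}, A^{*(3)} are {0} and Λ itself; that is, Λ is an irreducible module for the algebra generated by these six maps. -/
open Finset

noncomputable section

/-- The basis vector `x ⊗ y ⊗ z` of `V ⊗ V ⊗ V ≅ ℂ^(X×X×X)`. -/
def basis3 {X : Type} [DecidableEq X] (x y z : X) : X × X × X → ℂ :=
  fun w => (if w.1 = x then 1 else 0) * (if w.2.1 = y then 1 else 0) * (if w.2.2 = z then 1 else 0)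

/-- `B(r,s,t,u) = Σ x⊗y⊗z`, summed over the ordered triples `(x,y,z)` with profile
`(r,s,t,u)`, i.e. with `∂(x,y) = s+t`, `∂(y,z) = t+u`, `∂(z,x) = u+s`. -/
def Bvec {X : Type} [Fintype X] [DecidableEq X] (G : SimpleGraph X) (r s t u : ℕ) :
    X × X × X → ℂ :=
  ∑ w ∈ Finset.univ.filter (fun w : X × X × X =>
      G.dist w.1 w.2.1 = s + t ∧ G.dist w.2.1 w.2.2 = t + u ∧ G.dist w.2.2 w.1 = u + s),
    basis3 w.1 w.2.1 w.2.2

/-- The finset `P_D` of profiles of degree `D`. -/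
def profiles (D : ℕ) : Finset (ℕ × ℕ × ℕ × ℕ) :=
  (Finset.range (D + 1) ×ˢ Finset.range (D + 1) ×ˢ Finset.range (D + 1)
      ×ˢ Finset.range (D + 1)).filter
    (fun v => v.1 + v.2.1 + v.2.2.1 + v.2.2.2 = D)

/-- The Hermitian form on `V^{⊗3}` making the vectors `x⊗y⊗z` orthonormal. -/
def herm {X : Type} [Fintype X] (f g : X × X × X → ℂ) : ℂ :=
  ∑ w : X × X × X, f w * (starRingEnd ℂ) (g w)

/-- `A^{(1)}`: the adjacency map of `Γ` acting on the first tensor factor. -/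
def A1op {X : Type} [Fintype X] [DecidableEq X] (G : SimpleGraph X) :
    Matrix (X × X × X) (X × X × X) ℂ :=
  Matrix.of (fun w w' => if G.dist w.1 w'.1 = 1 ∧ w.2.1 = w'.2.1 ∧ w.2.2 = w'.2.2 then 1 else 0)

/-- `A^{(2)}`: the adjacency map of `Γ` acting on the second tensor factor. -/
def A2op {X : Type} [Fintype X] [DecidableEq X] (G : SimpleGraph X) :
    Matrix (X × X × X) (X × X × X) ℂ :=
  Matrix.of (fun w w' => if w.1 = w'.1 ∧ G.dist w.2.1 w'.2.1 = 1 ∧ w.2.2 = w'.2.2 then 1 else 0)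

/-- `A^{(3)}`: the adjacency map of `Γ` acting on the third tensor factor. -/
def A3op {X : Type} [Fintype X] [DecidableEq X] (G : SimpleGraph X) :
    Matrix (X × X × X) (X × X × X) ℂ :=
  Matrix.of (fun w w' => if w.1 = w'.1 ∧ w.2.1 = w'.2.1 ∧ G.dist w.2.2 w'.2.2 = 1 then 1 else 0)

/-- `A^{*(1)}`: `x⊗y⊗z ↦ θ*_{∂(y,z)} x⊗y⊗z`. -/
def As1op {X : Type} [Fintype X] [DecidableEq X] (G : SimpleGraph X) (θs : ℕ → ℝ) :
    Matrix (X × X × X) (X × X × X) ℂ :=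
  Matrix.of (fun w w' => if w = w' then ((θs (G.dist w.2.1 w.2.2) : ℝ) : ℂ) else 0)

/-- `A^{*(2)}`: `x⊗y⊗z ↦ θ*_{∂(z,x)} x⊗y⊗z`. -/
def As2op {X : Type} [Fintype X] [DecidableEq X] (G : SimpleGraph X) (θs : ℕ → ℝ) :
    Matrix (X × X × X) (X × X × X) ℂ :=
  Matrix.of (fun w w' => if w = w' then ((θs (G.dist w.2.2 w.1) : ℝ) : ℂ) else 0)

/-- `A^{*(3)}`: `x⊗y⊗z ↦ θ*_{∂(x,y)} x⊗y⊗z`. -/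
def As3op {X : Type} [Fintype X] [DecidableEq X] (G : SimpleGraph X) (θs : ℕ → ℝ) :
    Matrix (X × X × X) (X × X × X) ℂ :=
  Matrix.of (fun w w' => if w = w' then ((θs (G.dist w.1 w.2.1) : ℝ) : ℂ) else 0)

/-- `Λ`: the subspace of `V^{⊗3}` spanned by the vectors `B(r,s,t,u)`, `(r,s,t,u) ∈ P_D`. -/
def Lam {X : Type} [Fintype X] [DecidableEq X] (G : SimpleGraph X) (D : ℕ) :
    Submodule ℂ ((X × X × X) → ℂ) :=
  Submodule.span ℂ (Set.range (fun w : {w : ℕ × ℕ × ℕ × ℕ // w ∈ profiles D} =>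
    Bvec G w.1.1 w.1.2.1 w.1.2.2.1 w.1.2.2.2))

/-!
The diagonal maps `A^{*(i)}` multiply by `θ*` of the three distances of a triple. The dual
eigenvalues are distinct (they equal the eigenvalues, and `A` has `D + 1` distinct eigenvalues since
`Γ` has diameter `D`), so Lagrange interpolation lets an invariant subspace `U ≤ Λ` restrict each of
its vectors to a fibre of the distance triple `(∂(x,y), ∂(y,z), ∂(z,x))`. Vectors of `Λ` are
constant on these fibres, so `U` contains the indicator of the fibre of every triple where one of
its vectors does not vanish. Applying `A^{(i)}` to such an indicator gives a vector that does not
vanish at the triple with its `i`-th vertex moved along an edge; as `Γ` is connected, `U` contains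
every fibre indicator, and these span `Λ`.
-/

open Polynomial Matrix

section LevelSets

variable {ι K : Type*} [Field K] {U : Submodule K (ι → K)} {g : ι → K}

theorem eval_comp_mul_mem_of_mul_mem (hg : ∀ u ∈ U, g * u ∈ U) (q : K[X]) {v : ι → K}
    (hv : v ∈ U) : (fun i => q.eval (g i)) * v ∈ U := by
  induction q using Polynomial.induction_on' with
  | add p q hp hq =>
    convert U.add_mem hp hq using 1
    ext i
    simp [add_mul]
  | monomial n a =>
    have hpow : g ^ n * v ∈ U := by
      induction n with
      | zero => simpa using hv
      | succ n ih => simpa only [pow_succ', mul_assoc] using hg _ ih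
    convert U.smul_mem a hpow using 1
    ext i
    simp [mul_assoc]

theorem ite_eq_mem_of_mul_mem [Fintype ι] [DecidableEq K] (hg : ∀ u ∈ U, g * u ∈ U)
    {v : ι → K} (hv : v ∈ U) (c : K) :
    (fun i => if g i = c then v i else 0) ∈ U := by
  -- Lagrange interpolation on the finitely many values of `g`
  set q : K[X] := ∏ t ∈ (Finset.univ.image g).erase c, (X - C t)
  have hq : ∀ i, q.eval (g i) = 0 ↔ g i ≠ c := by
    intro i
    simp [q, eval_prod, Finset.prod_eq_zero_iff, sub_eq_zero]
  have hqc : q.eval c ≠ 0 := by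
    simp [q, eval_prod, Finset.prod_eq_zero_iff, sub_eq_zero]
  convert U.smul_mem (q.eval c)⁻¹ (eval_comp_mul_mem_of_mul_mem hg q hv) using 1
  ext i
  by_cases hi : g i = c
  · simp [hi, hqc]
  · simp [hi, (hq i).2 hi]

end LevelSets

section Spectral

variable {K A : Type*} [CommRing K] [Ring A] [Algebra K A]

theorem aeval_mul_eq_eval_smul {a e : A} {c : K} (h : a * e = c • e) (q : K[X]) :
    aeval a q * e = q.eval c • e := by
  induction q using Polynomial.induction_on' with
  | add p q hp hq => rw [map_add, add_mul, hp, hq, eval_add, add_smul]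
  | monomial n r =>
    have hpow : a ^ n * e = c ^ n • e := by
      induction n with
      | zero => simp
      | succ n ih => rw [pow_succ', mul_assoc, ih, mul_smul_comm, h, smul_smul, pow_succ]
    rw [aeval_monomial, mul_assoc, hpow, ← Algebra.smul_def, smul_smul, eval_monomial, mul_comm]

theorem aeval_eq_zero_of_eval_eigenvalues_eq_zero {ι : Type*} {s : Finset ι} {a : A}
    {e : ι → A} {θ : ι → K} (hsum : ∑ i ∈ s, e i = 1) (heig : ∀ i ∈ s, a * e i = θ i • e i)
    {q : K[X]} (hq : ∀ i ∈ s, q.eval (θ i) = 0) : aeval a q = 0 := by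
  rw [← mul_one (aeval a q), ← hsum, Finset.mul_sum]
  exact Finset.sum_eq_zero fun i hi => by
    rw [aeval_mul_eq_eval_smul (heig i hi), hq i hi, zero_smul]

end Spectral

namespace SimpleGraph

variable {V : Type} [Fintype V] [DecidableEq V] (G : SimpleGraph V) [DecidableRel G.Adj]

theorem distMat_one_eq_adjMatrix : distMat G 1 = G.adjMatrix ℂ := by
  ext x y
  simp [distMat, adjMatrix_apply, dist_eq_one_iff_adj]

variable {R : Type*} [CommSemiring R]

theorem adjMatrix_pow_apply_eq_zero_of_lt_dist {n : ℕ} {x y : V} (h : n < G.dist x y) :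
    (G.adjMatrix R ^ n) x y = 0 := by
  have hno : IsEmpty {p : G.Walk x y | p.length = n} :=
    ⟨fun ⟨p, hp⟩ => (G.dist_le p).not_gt (hp ▸ h)⟩
  rw [adjMatrix_pow_apply_eq_card_walk, Fintype.card_eq_zero, Nat.cast_zero]

theorem adjMatrix_pow_dist_apply_ne_zero [CharZero R] {x y : V} (h : G.Reachable x y) :
    (G.adjMatrix R ^ G.dist x y) x y ≠ 0 := by
  rw [adjMatrix_pow_apply_eq_card_walk, Nat.cast_ne_zero, ← Nat.pos_iff_ne_zero,
    Fintype.card_pos_iff]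
  obtain ⟨p, hp⟩ := h.exists_walk_length_eq_dist
  exact ⟨⟨p, hp⟩⟩

theorem aeval_adjMatrix_apply_of_monic {q : R[X]} (hq : q.Monic)
    {x y : V} (hdeg : q.natDegree = G.dist x y) :
    aeval (G.adjMatrix R) q x y = (G.adjMatrix R ^ G.dist x y) x y := by
  have hlead : q.coeff (G.dist x y) = 1 := hdeg ▸ hq.coeff_natDegree
  rw [aeval_eq_sum_range, Matrix.sum_apply, Finset.sum_range_succ, hdeg, Matrix.smul_apply, hlead,
    one_smul, Finset.sum_eq_zero, zero_add]
  intro n hn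
  rw [Matrix.smul_apply,
    G.adjMatrix_pow_apply_eq_zero_of_lt_dist (Finset.mem_range.mp hn), smul_zero]

end SimpleGraph

open Finset in
/-- A monic polynomial of degree `D` vanishing at all eigenvalues would annihilate `A`; but at two
vertices at distance `D` the entries of `A^n`, `n < D`, vanish while that of `A^D` does not. -/
theorem injOn_eigenvalues_of_spectral_decomposition {V : Type} [Fintype V] [DecidableEq V]
    {G : SimpleGraph V} (hconn : G.Connected) {D : ℕ} (hdeq : ∃ x y : V, G.dist x y = D)
    {E : ℕ → Matrix V V ℂ} (hEsum : ∑ i ∈ range (D + 1), E i = 1) {θ : ℕ → ℝ}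
    (heig : ∀ i : ℕ, i ≤ D → distMat G 1 * E i = (θ i : ℂ) • E i) :
    Set.InjOn θ (Set.Iic D) := by
  classical
  intro i hi j hj hij
  by_contra hne
  obtain ⟨x, y, hxy⟩ := hdeq
  set q : ℂ[X] := ∏ k ∈ (range (D + 1)).erase j, (X - C (θ k : ℂ))
  have hmonic : q.Monic := monic_prod_of_monic _ _ fun k _ => monic_X_sub_C _
  have hdeg : q.natDegree = G.dist x y := by
    rw [natDegree_prod_of_monic _ _ fun k _ => monic_X_sub_C _]
    simp [hxy, card_erase_of_mem (mem_range.mpr (Nat.lt_succ_of_le hj))]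
  have hroot : ∀ k ∈ range (D + 1), q.eval (θ k : ℂ) = 0 := by
    intro k hk
    simp only [q, eval_prod, eval_sub, eval_X, eval_C, prod_eq_zero_iff, mem_erase, sub_eq_zero]
    by_cases hkj : k = j
    · exact ⟨i, ⟨hne, mem_range.mpr (Nat.lt_succ_of_le hi)⟩, by rw [hkj, hij]⟩
    · exact ⟨k, ⟨hkj, hk⟩, rfl⟩
  have hzero : aeval (G.adjMatrix ℂ) q = 0 := by
    refine aeval_eq_zero_of_eval_eigenvalues_eq_zero hEsum (fun k hk => ?_) hroot
    rw [← G.distMat_one_eq_adjMatrix]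
    exact heig k (Nat.le_of_lt_succ (mem_range.mp hk))
  apply G.adjMatrix_pow_dist_apply_ne_zero (R := ℂ) (hconn.preconnected x y)
  rw [← G.aeval_adjMatrix_apply_of_monic hmonic hdeg, hzero, Matrix.zero_apply]

theorem of_ite_mulVec_ite_apply_ne_zero {ι : Type*} [Fintype ι] {R : ι → ι → Prop}
    [DecidableRel R] {P : ι → Prop} [DecidablePred P] {a b : ι} (hR : R a b) (hP : P b) :
    (Matrix.of (fun a b => if R a b then (1 : ℂ) else 0) *ᵥ fun b => if P b then 1 else 0) a
      ≠ 0 := by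
  simp only [Matrix.mulVec, dotProduct, Matrix.of_apply, mul_ite, mul_one, mul_zero, ← ite_and]
  rw [Finset.sum_boole, Nat.cast_ne_zero]
  exact Finset.card_ne_zero_of_mem (Finset.mem_filter.mpr ⟨Finset.mem_univ b, hP, hR⟩)

section DistTriple

variable {X : Type} [Fintype X] [DecidableEq X] (G : SimpleGraph X)

def distTriple (w : X × X × X) : ℕ × ℕ × ℕ :=
  (G.dist w.1 w.2.1, G.dist w.2.1 w.2.2, G.dist w.2.2 w.1)

def fiberIndicator (τ : ℕ × ℕ × ℕ) : X × X × X → ℂ :=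
  fun w => if distTriple G w = τ then 1 else 0

theorem Bvec_eq_fiberIndicator (r s t u : ℕ) :
    Bvec G r s t u = fiberIndicator G (s + t, t + u, u + s) := by
  ext w
  have hbasis : ∀ w' : X × X × X, basis3 w'.1 w'.2.1 w'.2.2 w = if w = w' then 1 else 0 := by
    intro w'
    simp only [basis3, Prod.ext_iff, ite_and, mul_ite, mul_one, mul_zero]
    split_ifs <;> tauto
  simp only [Bvec, Finset.sum_apply, hbasis, Finset.sum_ite_eq, Finset.mem_filter,
    Finset.mem_univ, true_and, fiberIndicator, distTriple, Prod.mk.injEq]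

theorem apply_eq_of_mem_Lam {D : ℕ} {v : X × X × X → ℂ} (hv : v ∈ Lam G D) {w w' : X × X × X}
    (h : distTriple G w = distTriple G w') : v w = v w' := by
  induction hv using Submodule.span_induction with
  | mem f hf =>
    obtain ⟨⟨⟨r, s, t, u⟩, _⟩, rfl⟩ := hf
    simp only [Bvec_eq_fiberIndicator, fiberIndicator, h]
  | zero => rfl
  | add f g _ _ hf hg => simp only [Pi.add_apply, hf, hg]
  | smul c f _ hf => simp only [Pi.smul_apply, hf]

theorem Lam_le_of_forall_fiberIndicator_mem {D : ℕ} {U : Submodule ℂ (X × X × X → ℂ)}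
    (h : ∀ w, fiberIndicator G (distTriple G w) ∈ U) : Lam G D ≤ U := by
  rw [Lam, Submodule.span_le]
  rintro _ ⟨⟨⟨r, s, t, u⟩, _⟩, rfl⟩
  change Bvec G r s t u ∈ U
  rw [Bvec_eq_fiberIndicator]
  by_cases hτ : ∃ w, distTriple G w = (s + t, t + u, u + s)
  · obtain ⟨w, hw⟩ := hτ
    exact hw ▸ h w
  · convert U.zero_mem
    ext w
    simp only [fiberIndicator, Pi.zero_apply, ite_eq_right_iff, one_ne_zero]
    exact fun hw => hτ ⟨w, hw⟩

theorem As1op_mulVec (θs : ℕ → ℝ) (v : X × X × X → ℂ) :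
    As1op G θs *ᵥ v = (fun w => (θs (G.dist w.2.1 w.2.2) : ℂ)) * v := by
  ext w
  simp [As1op, mulVec, dotProduct]

theorem As2op_mulVec (θs : ℕ → ℝ) (v : X × X × X → ℂ) :
    As2op G θs *ᵥ v = (fun w => (θs (G.dist w.2.2 w.1) : ℂ)) * v := by
  ext w
  simp [As2op, mulVec, dotProduct]

theorem As3op_mulVec (θs : ℕ → ℝ) (v : X × X × X → ℂ) :
    As3op G θs *ᵥ v = (fun w => (θs (G.dist w.1 w.2.1) : ℂ)) * v := by
  ext w
  simp [As3op, mulVec, dotProduct]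

section Invariant

variable {D : ℕ} {θs : ℕ → ℝ} {U : Submodule ℂ (X × X × X → ℂ)}

theorem ite_distTriple_eq_mem (hdle : ∀ x y : X, G.dist x y ≤ D)
    (hinj : Set.InjOn θs (Set.Iic D)) (hAs1 : ∀ v ∈ U, As1op G θs *ᵥ v ∈ U)
    (hAs2 : ∀ v ∈ U, As2op G θs *ᵥ v ∈ U) (hAs3 : ∀ v ∈ U, As3op G θs *ᵥ v ∈ U)
    {v : X × X × X → ℂ} (hv : v ∈ U) (w₀ : X × X × X) :
    (fun w => if distTriple G w = distTriple G w₀ then v w else 0) ∈ U := by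
  have h3 := ite_eq_mem_of_mul_mem (fun u hu => As3op_mulVec G θs u ▸ hAs3 u hu) hv
    (θs (G.dist w₀.1 w₀.2.1) : ℂ)
  have h1 := ite_eq_mem_of_mul_mem (fun u hu => As1op_mulVec G θs u ▸ hAs1 u hu) h3
    (θs (G.dist w₀.2.1 w₀.2.2) : ℂ)
  have h2 := ite_eq_mem_of_mul_mem (fun u hu => As2op_mulVec G θs u ▸ hAs2 u hu) h1
    (θs (G.dist w₀.2.2 w₀.1) : ℂ)
  have hθs : ∀ x y x' y' : X,
      ((θs (G.dist x y) : ℂ) = θs (G.dist x' y') ↔ G.dist x y = G.dist x' y') :=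
    fun x y x' y' => ⟨fun h => hinj (hdle x y) (hdle x' y') (by exact_mod_cast h),
      fun h => by rw [h]⟩
  convert h2 using 1
  ext w
  simp only [hθs, distTriple, Prod.mk.injEq]
  split_ifs <;> tauto

theorem fiberIndicator_mem_of_apply_ne_zero (hUle : U ≤ Lam G D)
    (hdle : ∀ x y : X, G.dist x y ≤ D) (hinj : Set.InjOn θs (Set.Iic D))
    (hAs1 : ∀ v ∈ U, As1op G θs *ᵥ v ∈ U) (hAs2 : ∀ v ∈ U, As2op G θs *ᵥ v ∈ U)
    (hAs3 : ∀ v ∈ U, As3op G θs *ᵥ v ∈ U) {v : X × X × X → ℂ} (hv : v ∈ U) {w₀ : X × X × X} (hw₀ : v w₀ ≠ 0) :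
    fiberIndicator G (distTriple G w₀) ∈ U := by
  have hres := ite_distTriple_eq_mem G hdle hinj hAs1 hAs2 hAs3 hv w₀
  convert U.smul_mem (v w₀)⁻¹ hres using 1
  ext w
  by_cases hw : distTriple G w = distTriple G w₀
  · simp [fiberIndicator, hw, apply_eq_of_mem_Lam G (hUle hv) hw, hw₀]
  · simp [fiberIndicator, hw]

end Invariant

section Propagation

variable {U : Submodule ℂ (X × X × X → ℂ)}

theorem fiberIndicator_mem_of_boxProd_adj (hA1 : ∀ v ∈ U, A1op G *ᵥ v ∈ U)
    (hA2 : ∀ v ∈ U, A2op G *ᵥ v ∈ U) (hA3 : ∀ v ∈ U, A3op G *ᵥ v ∈ U)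
    (hfib : ∀ v ∈ U, ∀ w, v w ≠ 0 → fiberIndicator G (distTriple G w) ∈ U)
    {w w' : X × X × X} (hadj : (G □ (G □ G)).Adj w w')
    (hw : fiberIndicator G (distTriple G w) ∈ U) :
    fiberIndicator G (distTriple G w') ∈ U := by
  obtain ⟨x, y, z⟩ := w
  obtain ⟨x', y', z'⟩ := w'
  simp only [SimpleGraph.boxProd_adj, Prod.mk.injEq] at hadj
  rcases hadj with ⟨hx, rfl, rfl⟩ | ⟨⟨hy, rfl⟩ | ⟨hz, rfl⟩, rfl⟩
  · exact hfib _ (hA1 _ hw) (x', y, z) (of_ite_mulVec_ite_apply_ne_zero (b := (x, y, z))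
      ⟨SimpleGraph.dist_eq_one_iff_adj.2 hx.symm, rfl, rfl⟩ rfl)
  · exact hfib _ (hA2 _ hw) (x, y', z) (of_ite_mulVec_ite_apply_ne_zero (b := (x, y, z))
      ⟨rfl, SimpleGraph.dist_eq_one_iff_adj.2 hy.symm, rfl⟩ rfl)
  · exact hfib _ (hA3 _ hw) (x, y, z') (of_ite_mulVec_ite_apply_ne_zero (b := (x, y, z))
      ⟨rfl, rfl, SimpleGraph.dist_eq_one_iff_adj.2 hz.symm⟩ rfl)

theorem fiberIndicator_mem_of_connected (hconn : G.Connected) (hA1 : ∀ v ∈ U, A1op G *ᵥ v ∈ U)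
    (hA2 : ∀ v ∈ U, A2op G *ᵥ v ∈ U) (hA3 : ∀ v ∈ U, A3op G *ᵥ v ∈ U)
    (hfib : ∀ v ∈ U, ∀ w, v w ≠ 0 → fiberIndicator G (distTriple G w) ∈ U)
    {w₀ : X × X × X} (hw₀ : fiberIndicator G (distTriple G w₀) ∈ U) (w : X × X × X) :
    fiberIndicator G (distTriple G w) ∈ U := by
  have hreach := (hconn.boxProd (hconn.boxProd hconn)).preconnected w₀ w
  rw [SimpleGraph.reachable_iff_reflTransGen] at hreach
  induction hreach with
  | refl => exact hw₀
  | tail _ hadj ih => exact fiberIndicator_mem_of_boxProd_adj G hA1 hA2 hA3 hfib hadj ih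

end Propagation

end DistTriple

theorem stmt18_general
    {X : Type} [Fintype X] [DecidableEq X] (G : SimpleGraph X)
    (hconn : G.Connected)
    (D : ℕ)
    (hdle : ∀ x y : X, G.dist x y ≤ D) (hdeq : ∃ x y : X, G.dist x y = D)
    (E : ℕ → Matrix X X ℂ)
    (hEsum : ∑ i ∈ Finset.range (D + 1), E i = 1)
    (θ : ℕ → ℝ)
    (heig : ∀ i : ℕ, i ≤ D → distMat G 1 * E i = (θ i : ℂ) • E i)
    (θs : ℕ → ℝ)
    (hsd : ∀ i : ℕ, i ≤ D → θ i = θs i)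
    :
    ∀ U : Submodule ℂ ((X × X × X) → ℂ), U ≤ Lam G D →
      (∀ v, v ∈ U →
        (A1op G).mulVec v ∈ U ∧ (A2op G).mulVec v ∈ U ∧ (A3op G).mulVec v ∈ U ∧
        (As1op G θs).mulVec v ∈ U ∧ (As2op G θs).mulVec v ∈ U ∧ (As3op G θs).mulVec v ∈ U) →
      U = ⊥ ∨ U = Lam G D := by
  intro U hUle hU
  have hinj : Set.InjOn θs (Set.Iic D) :=
    (injOn_eigenvalues_of_spectral_decomposition hconn hdeq hEsum heig).congr hsd
  have hfib : ∀ v ∈ U, ∀ w, v w ≠ 0 → fiberIndicator G (distTriple G w) ∈ U :=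
    fun _ hv _ hw => fiberIndicator_mem_of_apply_ne_zero G hUle hdle hinj
      (fun v hv => (hU v hv).2.2.2.1) (fun v hv => (hU v hv).2.2.2.2.1)
      (fun v hv => (hU v hv).2.2.2.2.2) hv hw
  rcases eq_or_ne U ⊥ with hbot | hne
  · exact Or.inl hbot
  obtain ⟨v, hv, hv0⟩ := U.ne_bot_iff.mp hne
  obtain ⟨w₀, hw₀⟩ := Function.ne_iff.mp hv0
  refine Or.inr (hUle.antisymm (Lam_le_of_forall_fiberIndicator_mem G fun w => ?_))
  exact fiberIndicator_mem_of_connected G hconn (fun v hv => (hU v hv).1)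
    (fun v hv => (hU v hv).2.1) (fun v hv => (hU v hv).2.2.1) hfib (hfib v hv w₀ hw₀) w

/-- `Λ` is irreducible for the algebra generated by the six maps: its only subspaces
invariant under `A^{(1)},A^{(2)},A^{(3)},A^{*(1)},A^{*(2)},A^{*(3)}` are `{0}` and `Λ`. -/
theorem stmt18
    {X : Type} [Fintype X] [DecidableEq X] (G : SimpleGraph X)
    (hX : 2 ≤ Fintype.card X) (hconn : G.Connected)
    (D : ℕ) (hD : 3 ≤ D)
    (hdle : ∀ x y : X, G.dist x y ≤ D) (hdeq : ∃ x y : X, G.dist x y = D)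
    (p : ℕ → ℕ → ℕ → ℕ)
    (hreg : ∀ h i j : ℕ, h ≤ D → i ≤ D → j ≤ D → ∀ x y : X, G.dist x y = h →
      (Finset.univ.filter (fun ξ : X => G.dist x ξ = i ∧ G.dist y ξ = j)).card = p h i j)
    (hbip : ∀ i : ℕ, i ≤ D → p i 1 i = 0)
    (hantip : p 0 D D = 1)
    (E : ℕ → Matrix X X ℂ)
    (hE0 : E 0 = (Fintype.card X : ℂ)⁻¹ • Matrix.of (fun _ _ => 1))
    (hidem : ∀ i j : ℕ, i ≤ D → j ≤ D → E i * E j = if i = j then E i else 0)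
    (hherm : ∀ i : ℕ, i ≤ D → (E i).IsHermitian)
    (hEsum : ∑ i ∈ Finset.range (D + 1), E i = 1)
    (θ : ℕ → ℝ)
    (heig : ∀ i : ℕ, i ≤ D → distMat G 1 * E i = (θ i : ℂ) • E i)
    (qK : ℕ → ℕ → ℕ → ℂ)
    (hKrein : ∀ i j : ℕ, i ≤ D → j ≤ D →
      Matrix.hadamard (E i) (E j)
        = (Fintype.card X : ℂ)⁻¹ • ∑ h ∈ Finset.range (D + 1), qK h i j • E h)
    (hQ0 : ∀ h i j : ℕ, h ≤ D → i ≤ D → j ≤ D → (i + j < h ∨ j + h < i ∨ h + i < j) → qK h i j = 0)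
    (hQ1 : ∀ h i j : ℕ, h ≤ D → i ≤ D → j ≤ D → (h = i + j ∨ i = j + h ∨ j = h + i) → qK h i j ≠ 0)
    (θs : ℕ → ℝ)
    (hdual : E 1 = (Fintype.card X : ℂ)⁻¹ • ∑ i ∈ Finset.range (D + 1), (θs i : ℂ) • distMat G i)
    (hsd : ∀ i : ℕ, i ≤ D → θ i = θs i)
    (hpq : ∀ h i j : ℕ, h ≤ D → i ≤ D → j ≤ D → qK h i j = (p h i j : ℂ))
    :
    ∀ U : Submodule ℂ ((X × X × X) → ℂ), U ≤ Lam G D →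
      (∀ v, v ∈ U →
        (A1op G).mulVec v ∈ U ∧ (A2op G).mulVec v ∈ U ∧ (A3op G).mulVec v ∈ U ∧
        (As1op G θs).mulVec v ∈ U ∧ (As2op G θs).mulVec v ∈ U ∧ (As3op G θs).mulVec v ∈ U) →
      U = ⊥ ∨ U = Lam G D :=
  stmt18_general G hconn D hdle hdeq E hEsum θ heig θs hsd
end
end
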